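/- arXiv:2605.21473 — 4 statements merged into one kernel-verified Lean document; each statement's English description precedes it below -/
import Mathlib

section
/- Let {I_n} be a partition of ω into finite intervals and {r_n} a descending sequence of positive rationals with r_0 = 1, I_0 = {0}, |⋃_{j<n} I_j| ≤ r_n·|I_n| for all n ≥ 1, and |I_n|·r_{n+1} ≤ 2^{-n-1}. For S ⊆ ω define the weight w_S(m) = r_n if m ∈ I_n and n ∉ S, and w_S(m) = r_{n+1} if m ∈ I_n and n ∈ S. Then for every co-infinite S ⊆ ω, the sum ∑_{m∈ω} w_S(m) diverges, while lim_{m→∞} w_S(m) = 0. -/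
/-!
On a block `I n` with `n ∉ S` the weight is constantly `r n`, so the block contributes
`|I n| · r n ≥ |⋃_{j<n} I j| ≥ n`; as `Sᶜ` is infinite, the partial sums are unbounded.
On the other hand `r (n + 1) ≤ |I n| · r (n + 1) ≤ 2⁻¹ ^ (n + 1)` forces `r n → 0`, and
`w_S(m)` is squeezed between `0` and `r n + r (n + 1)` where `n → ∞` is the block of `m`.
-/

open Filter Finset Function

section Blocks

variable {I : ℕ → Finset ℕ}

theorem pairwise_disjoint_of_existsUnique_mem (hpart : ∀ m, ∃! n, m ∈ I n) :
    Pairwise (Disjoint on I) := fun _ _ hab =>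
  Finset.disjoint_left.2 fun m hma hmb => hab ((hpart m).unique hma hmb)

theorem le_card_biUnion_range (hdisj : Pairwise (Disjoint on I))
    (hne : ∀ n, (I n).Nonempty) (n : ℕ) : n ≤ ((range n).biUnion I).card := by
  rw [card_biUnion fun a _ b _ hab => hdisj hab]
  calc n = ∑ _j ∈ range n, 1 := by simp
    _ ≤ ∑ j ∈ range n, (I j).card := sum_le_sum fun j _ => (hne j).card_pos

theorem tendsto_atTop_of_forall_mem (idx : ℕ → ℕ) (hidx : ∀ m, m ∈ I (idx m)) :
    Tendsto idx atTop atTop := by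
  refine tendsto_atTop.2 fun N => ?_
  rw [← Nat.cofinite_eq_atTop]
  have hfin : {m | idx m < N}.Finite :=
    ((range N).biUnion I).finite_toSet.subset fun m hm =>
      mem_biUnion.2 ⟨idx m, mem_range.2 hm, hidx m⟩
  filter_upwards [hfin.eventually_cofinite_notMem] with m hm
  exact not_lt.1 hm

theorem nonempty_of_card_biUnion_range_le {r : ℕ → ℚ} (hI0 : I 0 = {0})
    (hgrow : ∀ n, 1 ≤ n → (((range n).biUnion I).card : ℚ) ≤ r n * (I n).card) (n : ℕ) :
    (I n).Nonempty := by
  rcases Nat.eq_zero_or_pos n with rfl | hn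
  · simp [hI0]
  · rw [nonempty_iff_ne_empty]
    intro hempty
    have hzero : 0 ∈ (range n).biUnion I := mem_biUnion.2 ⟨0, mem_range.2 hn, by simp [hI0]⟩
    have hle := hgrow n hn
    rw [hempty, card_empty, Nat.cast_zero, mul_zero, Nat.cast_nonpos, card_eq_zero] at hle
    simp [hle] at hzero

theorem natCast_le_card_mul_of_card_biUnion_range_le {r : ℕ → ℚ}
    (hpart : ∀ m, ∃! n, m ∈ I n) (hI0 : I 0 = {0})
    (hgrow : ∀ n, 1 ≤ n → (((range n).biUnion I).card : ℚ) ≤ r n * (I n).card)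
    {n : ℕ} (hn : 1 ≤ n) : (n : ℚ) ≤ (I n).card * r n := by
  have hcard := le_card_biUnion_range (pairwise_disjoint_of_existsUnique_mem hpart)
    (nonempty_of_card_biUnion_range_le hI0 hgrow) n
  rw [mul_comm]
  exact (Nat.cast_le.2 hcard).trans (hgrow n hn)

theorem tendsto_zero_of_card_mul_le {r : ℕ → ℚ} (hne : ∀ n, (I n).Nonempty)
    (hpos : ∀ n, 0 < r n) (hsmall : ∀ n, ((I n).card : ℚ) * r (n + 1) ≤ (2 : ℚ)⁻¹ ^ (n + 1)) :
    Tendsto (fun n => (r n : ℝ)) atTop (nhds 0) := by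
  rw [← tendsto_add_atTop_iff_nat 1]
  have hbound : ∀ n, (r (n + 1) : ℝ) ≤ (2 : ℝ)⁻¹ ^ (n + 1) := fun n => by
    have hcard : (1 : ℚ) ≤ (I n).card := by exact_mod_cast (hne n).card_pos
    have : r (n + 1) ≤ (2 : ℚ)⁻¹ ^ (n + 1) :=
      (le_mul_of_one_le_left (hpos _).le hcard).trans (hsmall n)
    simpa using (Rat.cast_le (K := ℝ)).2 this
  refine squeeze_zero (fun n => by exact_mod_cast (hpos _).le) hbound ?_
  exact (tendsto_pow_atTop_nhds_zero_of_lt_one (by norm_num) (by norm_num)).comp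
    (tendsto_add_atTop_nat 1)

end Blocks

theorem not_summable_of_forall_exists_le_sum {f : ℕ → ℝ} (hf : ∀ m, 0 ≤ f m)
    (h : ∀ N : ℕ, ∃ s : Finset ℕ, N ≤ ∑ m ∈ s, f m) : ¬ Summable f := fun hsum => by
  obtain ⟨N, hN⟩ := exists_nat_gt (∑' m, f m)
  obtain ⟨s, hs⟩ := h N
  linarith [hsum.sum_le_tsum s fun m _ => hf m]

theorem stmt1_general (I : ℕ → Finset ℕ) (r : ℕ → ℚ)
    (hpart : ∀ m : ℕ, ∃! n, m ∈ I n)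
    (hpos : ∀ n, 0 < r n)
    (hI0 : I 0 = {0})
    (hgrow : ∀ n, 1 ≤ n → (((Finset.range n).biUnion I).card : ℚ) ≤ r n * (I n).card)
    (hsmall : ∀ n, ((I n).card : ℚ) * r (n + 1) ≤ (2 : ℚ)⁻¹ ^ (n + 1))
    (w : Set ℕ → ℕ → ℚ)
    (hw : ∀ (S : Set ℕ) (m n : ℕ), m ∈ I n →
      (n ∉ S → w S m = r n) ∧ (n ∈ S → w S m = r (n + 1)))
    (S : Set ℕ) (hS : Sᶜ.Infinite) :
    ¬ Summable (fun m => ((w S m : ℝ))) ∧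
      Filter.Tendsto (fun m => ((w S m : ℝ))) Filter.atTop (nhds 0) := by
  choose idx hidx using fun m => (hpart m).exists
  have hne := nonempty_of_card_biUnion_range_le hI0 hgrow
  have hw_bounds (m : ℕ) : 0 ≤ w S m ∧ w S m ≤ r (idx m) + r (idx m + 1) := by
    have := hpos (idx m)
    have := hpos (idx m + 1)
    by_cases h : idx m ∈ S
    · rw [(hw S m _ (hidx m)).2 h]; constructor <;> linarith
    · rw [(hw S m _ (hidx m)).1 h]; constructor <;> linarith
  have hw_nonneg (m : ℕ) : (0 : ℝ) ≤ w S m := by exact_mod_cast (hw_bounds m).1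
  constructor
  · refine not_summable_of_forall_exists_le_sum hw_nonneg fun N => ?_
    obtain ⟨n, hnS, hNn⟩ := hS.exists_gt N
    refine ⟨I n, ?_⟩
    rw [sum_congr rfl fun m hm => by rw [(hw S m n hm).1 hnS], sum_const, nsmul_eq_mul]
    exact_mod_cast (Nat.cast_le.2 hNn.le).trans
      (natCast_le_card_mul_of_card_biUnion_range_le hpart hI0 hgrow (n := n) (by omega))
  · have hr := tendsto_zero_of_card_mul_le hne hpos hsmall
    have hidx_top := tendsto_atTop_of_forall_mem idx hidx
    refine squeeze_zero hw_nonneg (fun m => (Rat.cast_le (K := ℝ)).2 (hw_bounds m).2) ?_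
    simpa using (hr.comp hidx_top).add ((hr.comp (tendsto_add_atTop_nat 1)).comp hidx_top)

/-- Construction 2.1: for every co-infinite `S ⊆ ω`, the total weight `∑ w_S(m)` diverges
while `w_S(m) → 0`. -/
theorem stmt1 (I : ℕ → Finset ℕ) (r : ℕ → ℚ)
    (hpart : ∀ m : ℕ, ∃! n, m ∈ I n)
    (hord : ∀ n m : ℕ, n < m → ∀ a ∈ I n, ∀ b ∈ I m, a < b)
    (hpos : ∀ n, 0 < r n) (hdesc : ∀ n, r (n + 1) < r n)
    (hr0 : r 0 = 1) (hI0 : I 0 = {0})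
    (hgrow : ∀ n, 1 ≤ n → (((Finset.range n).biUnion I).card : ℚ) ≤ r n * (I n).card)
    (hsmall : ∀ n, ((I n).card : ℚ) * r (n + 1) ≤ (2 : ℚ)⁻¹ ^ (n + 1))
    (w : Set ℕ → ℕ → ℚ)
    (hw : ∀ (S : Set ℕ) (m n : ℕ), m ∈ I n →
      (n ∉ S → w S m = r n) ∧ (n ∈ S → w S m = r (n + 1)))
    (S : Set ℕ) (hS : Sᶜ.Infinite) :
    ¬ Summable (fun m => ((w S m : ℝ))) ∧
      Filter.Tendsto (fun m => ((w S m : ℝ))) Filter.atTop (nhds 0) :=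
  stmt1_general I r hpart hpos hI0 hgrow hsmall w hw S hS
end

section
/- If A ⊆ ω is eventually D-sparse, meaning for every d ∈ ω there are only finitely many pairs (m,n) ∈ A×A with m > n and m − n = d, then A belongs to the positive difference ideal D, i.e. for every infinite B ⊆ ω, the set Δ(B) = {a − b : a, b ∈ B, a > b} is not contained in A. -/
/-- The set of positive differences of distinct elements of `B`. -/
def Delta (B : Set ℕ) : Set ℕ := {d | ∃ a ∈ B, ∃ b ∈ B, b < a ∧ a - b = d}

/-- An eventually `D`-sparse set belongs to the positive difference ideal `D`. -/
theorem stmt5 (A : Set ℕ)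
    (h : ∀ d : ℕ, {p : ℕ × ℕ | p.1 ∈ A ∧ p.2 ∈ A ∧ p.2 < p.1 ∧ p.1 - p.2 = d}.Finite) :
    ∀ B : Set ℕ, B.Infinite → ¬ Delta B ⊆ A := by
  intro B hB hsub
  obtain ⟨b0, hb0⟩ := hB.nonempty
  obtain ⟨b1, hb1, hb01⟩ := hB.exists_gt b0
  have hinf : (B \ Set.Iic b1).Infinite := hB.diff (Set.finite_Iic b1)
  have himg : ((fun b => ((b - b0, b - b1) : ℕ × ℕ)) '' (B \ Set.Iic b1)).Infinite := by
    apply hinf.image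
    intro x hx y hy hxy
    simp only [Set.mem_diff, Set.mem_Iic, not_le] at hx hy
    have h1 := congrArg Prod.fst hxy
    simp only at h1
    omega
  apply himg
  refine (h (b1 - b0)).subset ?_
  rintro p ⟨b, hbmem, rfl⟩
  simp only [Set.mem_diff, Set.mem_Iic, not_le] at hbmem
  obtain ⟨hbB, hbgt⟩ := hbmem
  dsimp only
  refine ⟨hsub ⟨b, hbB, b0, hb0, by omega, rfl⟩,
          hsub ⟨b, hbB, b1, hb1, by omega, rfl⟩, by omega, by omega⟩
end

section
/- Let C₀, C₁, C₂, ... be finite subsets of ω such that at each stage k, no pair (x,y) ∈ C_k × ⋃_{j≤k} C_j of distinct elements realizes a difference |x−y| that already occurs as a difference of two elements of ⋃_{j<k} C_j. Then C = ⋃_k C_k is eventually D-sparse: every d ∈ ω is realized as a difference m − n with m, n ∈ C, m > n, by only finitely many pairs. -/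
/-- If each finite stage `C_k` introduces no pair whose difference was already realized by
two elements of the earlier stages, then `⋃ C_k` is eventually `D`-sparse. -/
theorem stmt11 (C : ℕ → Finset ℕ)
    (h : ∀ k : ℕ, ∀ x ∈ C k, ∀ y ∈ (Finset.range (k + 1)).biUnion C, x ≠ y →
      ¬ ∃ a ∈ (Finset.range k).biUnion C, ∃ b ∈ (Finset.range k).biUnion C,
          b < a ∧ a - b = max x y - min x y) :
    ∀ d : ℕ,
      {p : ℕ × ℕ | p.1 ∈ ⋃ k, (C k : Set ℕ) ∧ p.2 ∈ ⋃ k, (C k : Set ℕ) ∧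
        p.2 < p.1 ∧ p.1 - p.2 = d}.Finite := by
  intro d
  set S : Set (ℕ × ℕ) := {p : ℕ × ℕ | p.1 ∈ ⋃ k, (C k : Set ℕ) ∧ p.2 ∈ ⋃ k, (C k : Set ℕ) ∧
        p.2 < p.1 ∧ p.1 - p.2 = d} with hSdef
  rcases Set.eq_empty_or_nonempty S with hE | ⟨p₀, hp₀⟩
  · rw [hE]; exact Set.finite_empty
  have exk : ∀ p ∈ S, ∃ k : ℕ,
      p.1 ∈ (Finset.range (k+1)).biUnion C ∧ p.2 ∈ (Finset.range (k+1)).biUnion C := by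
    rintro p ⟨h1, h2, -, -⟩
    rw [Set.mem_iUnion] at h1 h2
    obtain ⟨i, hi⟩ := h1; obtain ⟨j, hj⟩ := h2
    refine ⟨max i j, ?_, ?_⟩ <;> rw [Finset.mem_biUnion]
    · exact ⟨i, Finset.mem_range.mpr (by omega), hi⟩
    · exact ⟨j, Finset.mem_range.mpr (by omega), hj⟩
  set k₀ : ℕ := Nat.find (exk p₀ hp₀) with hk₀
  have hp0a : p₀.1 ∈ (Finset.range (k₀+1)).biUnion C := (Nat.find_spec (exk p₀ hp₀)).1
  have hp0b : p₀.2 ∈ (Finset.range (k₀+1)).biUnion C := (Nat.find_spec (exk p₀ hp₀)).2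
  apply Set.Finite.subset
    (Finset.finite_toSet (((Finset.range (k₀+1)).biUnion C) ×ˢ ((Finset.range (k₀+1)).biUnion C)))
  intro q hq
  set kq : ℕ := Nat.find (exk q hq) with hkq
  have hq1 : q.1 ∈ (Finset.range (kq+1)).biUnion C := (Nat.find_spec (exk q hq)).1
  have hq2 : q.2 ∈ (Finset.range (kq+1)).biUnion C := (Nat.find_spec (exk q hq)).2
  have hlt : q.2 < q.1 := hq.2.2.1
  have hdq : q.1 - q.2 = d := hq.2.2.2
  have hlt0 : p₀.2 < p₀.1 := hp₀.2.2.1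
  have hd0 : p₀.1 - p₀.2 = d := hp₀.2.2.2
  -- one of q's coordinates is in C kq
  have hx : q.1 ∈ C kq ∨ q.2 ∈ C kq := by
    rcases Nat.eq_zero_or_pos kq with h0 | hpos
    · left
      rw [h0] at hq1 ⊢
      rw [Finset.mem_biUnion] at hq1
      obtain ⟨i, hi, hmem⟩ := hq1
      rw [Finset.mem_range] at hi
      have : i = 0 := by omega
      exact this ▸ hmem
    · by_contra hc
      push_neg at hc
      obtain ⟨hc1, hc2⟩ := hc
      have hm : kq - 1 < kq := by omega
      apply Nat.find_min (exk q hq) hm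
      constructor
      · rw [Finset.mem_biUnion] at hq1 ⊢
        obtain ⟨i, hi, hmem⟩ := hq1
        rw [Finset.mem_range] at hi
        refine ⟨i, Finset.mem_range.mpr ?_, hmem⟩
        rcases Nat.lt_or_ge i kq with h' | h'
        · omega
        · exfalso; have : i = kq := by omega
          exact hc1 (this ▸ hmem)
      · rw [Finset.mem_biUnion] at hq2 ⊢
        obtain ⟨i, hi, hmem⟩ := hq2
        rw [Finset.mem_range] at hi
        refine ⟨i, Finset.mem_range.mpr ?_, hmem⟩
        rcases Nat.lt_or_ge i kq with h' | h'
        · omega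
        · exfalso; have : i = kq := by omega
          exact hc2 (this ▸ hmem)
  -- kq ≤ k₀
  have hle : kq ≤ k₀ := by
    by_contra hgt
    push_neg at hgt
    have ha : p₀.1 ∈ (Finset.range kq).biUnion C := by
      rw [Finset.mem_biUnion] at hp0a ⊢
      obtain ⟨i, hi, hmem⟩ := hp0a
      rw [Finset.mem_range] at hi
      exact ⟨i, Finset.mem_range.mpr (by omega), hmem⟩
    have hb : p₀.2 ∈ (Finset.range kq).biUnion C := by
      rw [Finset.mem_biUnion] at hp0b ⊢
      obtain ⟨i, hi, hmem⟩ := hp0b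
      rw [Finset.mem_range] at hi
      exact ⟨i, Finset.mem_range.mpr (by omega), hmem⟩
    rcases hx with hx1 | hx2
    · exact h kq q.1 hx1 q.2 hq2 (by omega)
        ⟨p₀.1, ha, p₀.2, hb, hlt0, by
          rw [Nat.max_eq_left (le_of_lt hlt), Nat.min_eq_right (le_of_lt hlt)]; omega⟩
    · exact h kq q.2 hx2 q.1 hq1 (by omega)
        ⟨p₀.1, ha, p₀.2, hb, hlt0, by
          rw [Nat.max_eq_right (le_of_lt hlt), Nat.min_eq_left (le_of_lt hlt)]; omega⟩
  -- conclude
  rw [Finset.mem_coe, Finset.mem_product]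
  constructor
  · rw [Finset.mem_biUnion] at hq1 ⊢
    obtain ⟨i, hi, hmem⟩ := hq1
    rw [Finset.mem_range] at hi
    exact ⟨i, Finset.mem_range.mpr (by omega), hmem⟩
  · rw [Finset.mem_biUnion] at hq2 ⊢
    obtain ⟨i, hi, hmem⟩ := hq2
    rw [Finset.mem_range] at hi
    exact ⟨i, Finset.mem_range.mpr (by omega), hmem⟩
end

section
/- Every summable ideal is Katětov below the density-zero ideal: if f: ω → [0,∞) satisfies lim f(m) = 0 and ∑_m f(m) = ∞, then there exists h: ω → ω such that for every A with ∑_{m∈A} f(m) < ∞, the preimage h⁻¹[A] has asymptotic density zero. -/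
/-!
Block `[2 ^ i, 2 ^ (i + 1))` is spread over the indices `m < i`, index `m` receiving about
`2 ^ i * f m / S i` of its points, where `S i = ∑ m < i, f m`. A set `A` with `∑_{m ∈ A} f m = σ`
then receives at most `2 ^ i * σ / S i + i` points of the block, which is `o(2 ^ i)` because
`S i → ∞`. A Stolz–Cesàro argument passes from dyadic blocks to initial segments.
-/

open Filter Finset Asymptotics Topology

namespace Asymptotics

theorem IsLittleO.of_isLittleO_succ_sub {E : Type*} [NormedAddCommGroup E] {a : ℕ → E}
    {b : ℕ → ℝ} (hb : Monotone b) (hb_top : Tendsto b atTop atTop)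
    (h : (fun n => a (n + 1) - a n) =o[atTop] fun n => b (n + 1) - b n) : a =o[atTop] b := by
  refine isLittleO_iff.2 fun c hc => ?_
  obtain ⟨J, hJ⟩ := eventually_atTop.1 (h.def (half_pos hc))
  have hdrift : ∀ n ≥ J, ‖a n - a J‖ ≤ c / 2 * (b n - b J) := by
    intro n hn
    induction n, hn using Nat.le_induction with
    | base => simp
    | succ n hn ih =>
      have hstep := hJ n hn
      rw [Real.norm_of_nonneg (sub_nonneg.2 (hb n.le_succ))] at hstep
      calc ‖a (n + 1) - a J‖ ≤ ‖a (n + 1) - a n‖ + ‖a n - a J‖ :=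
            norm_sub_le_norm_sub_add_norm_sub _ _ _
        _ ≤ c / 2 * (b (n + 1) - b J) := by linarith
  filter_upwards [eventually_ge_atTop J, hb_top.eventually_ge_atTop 0,
    (hb_top.const_mul_atTop (half_pos hc)).eventually_ge_atTop (‖a J‖ - c / 2 * b J)]
    with n hn hb0 hbig
  have hdrift_n := hdrift n hn
  rw [Real.norm_of_nonneg hb0]
  calc ‖a n‖ ≤ ‖a J‖ + ‖a n - a J‖ := norm_le_norm_add_norm_sub' _ _
    _ ≤ c * b n := by linarith

end Asymptotics

theorem Nat.ncard_inter_Iic_eq_count (s : Set ℕ) [DecidablePred (· ∈ s)] (n : ℕ) :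
    (s ∩ Set.Iic n).ncard = Nat.count (· ∈ s) (n + 1) := by
  rw [Nat.count_eq_card_filter_range, ← Set.ncard_coe_finset]
  congr 1
  ext k
  simp [and_comm]

theorem tendsto_count_div_of_isLittleO_dyadic (p : ℕ → Prop) [DecidablePred p]
    (h : (fun i => (Nat.count (fun r => p (2 ^ i + r)) (2 ^ i) : ℝ)) =o[atTop]
      fun i => (2 : ℝ) ^ i) :
    Tendsto (fun n => (Nat.count p (n + 1) : ℝ) / n) atTop (𝓝 0) := by
  have hdyadic : (fun i => (Nat.count p (2 ^ i) : ℝ)) =o[atTop] fun i => (2 : ℝ) ^ i := by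
    refine IsLittleO.of_isLittleO_succ_sub (pow_right_mono₀ one_le_two)
      (tendsto_pow_atTop_atTop_of_one_lt one_lt_two) ?_
    refine h.congr (fun i => ?_) (fun i => by ring)
    rw [pow_succ, mul_two, Nat.count_add, Nat.cast_add, add_sub_cancel_left]
  have hlog : Tendsto (fun n => Nat.log 2 n + 1) atTop atTop :=
    tendsto_atTop_atTop.2 fun i =>
      ⟨2 ^ i, fun n hn => (Nat.le_log_of_pow_le one_lt_two hn).trans (Nat.le_succ _)⟩
  have hcount : (fun n => (Nat.count p (n + 1) : ℝ)) =O[atTop]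
      fun n => (Nat.count p (2 ^ (Nat.log 2 n + 1)) : ℝ) :=
    isBigO_of_le _ fun n => by
      simp only [Real.norm_natCast, Nat.cast_le]
      exact Nat.count_monotone p (Nat.lt_pow_succ_log_self one_lt_two n)
  have hscale : (fun n => (2 : ℝ) ^ (Nat.log 2 n + 1)) =O[atTop] fun n => (n : ℝ) := by
    refine IsBigO.of_bound 2 ((eventually_ne_atTop 0).mono fun n hn => ?_)
    have : ((2 ^ Nat.log 2 n : ℕ) : ℝ) ≤ n := by exact_mod_cast Nat.pow_log_le_self 2 hn
    rw [Real.norm_of_nonneg (by positivity), Real.norm_natCast, pow_succ]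
    push_cast at this
    linarith
  exact (hcount.trans_isLittleO
    ((hdyadic.comp_tendsto hlog).trans_isBigO hscale)).tendsto_div_nhds_zero

/-- The segments `[∑ j < m, w j, ∑ j ≤ m, w j)` of lengths `w m` tile `ℕ`; this is the index of the
one containing `r` (junk `0` if the partial sums never exceed `r`). -/
noncomputable def partialSumIndex (w : ℕ → ℕ) (r : ℕ) : ℕ :=
  sInf {m | r < ∑ j ∈ range (m + 1), w j}

theorem partialSumIndex_spec {w : ℕ → ℕ} {r N : ℕ} (h : r < ∑ j ∈ range N, w j) :
    partialSumIndex w r < N ∧ r ∈ Ico (∑ j ∈ range (partialSumIndex w r), w j)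
      (∑ j ∈ range (partialSumIndex w r + 1), w j) := by
  have hN : 0 < N := Nat.pos_of_ne_zero fun h0 => by simp [h0] at h
  have hmem : N - 1 ∈ {m | r < ∑ j ∈ range (m + 1), w j} := by
    rwa [Set.mem_ofPred_eq, Nat.sub_add_cancel hN]
  refine ⟨(Nat.sInf_le hmem).trans_lt (Nat.sub_lt hN one_pos),
    mem_Ico.2 ⟨?_, Nat.sInf_mem ⟨_, hmem⟩⟩⟩
  rcases hk : partialSumIndex w r with _ | k
  · simp
  · have hk' : k < sInf {m | r < ∑ j ∈ range (m + 1), w j} := by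
      rw [← partialSumIndex, hk]; exact k.lt_succ_self
    have hk_not_mem := Nat.notMem_of_lt_sInf hk'
    exact not_lt.1 hk_not_mem

theorem count_partialSumIndex_mem_le (w : ℕ → ℕ) (A : Set ℕ) [DecidablePred (· ∈ A)]
    {L N : ℕ} (hL : L ≤ ∑ j ∈ range N, w j) :
    Nat.count (fun r => partialSumIndex w r ∈ A) L ≤ ∑ j ∈ range N with j ∈ A, w j := by
  rw [Nat.count_eq_card_filter_range]
  calc #{r ∈ range L | partialSumIndex w r ∈ A}
      ≤ #({j ∈ range N | j ∈ A}.biUnion fun j =>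
          Ico (∑ k ∈ range j, w k) (∑ k ∈ range (j + 1), w k)) := by
        refine card_le_card fun r hr => ?_
        rw [mem_filter, mem_range] at hr
        obtain ⟨hlt, hr_mem⟩ := partialSumIndex_spec (hr.1.trans_le hL)
        exact mem_biUnion.2 ⟨_, mem_filter.2 ⟨mem_range.2 hlt, hr.2⟩, hr_mem⟩
    _ ≤ ∑ j ∈ range N with j ∈ A, #(Ico (∑ k ∈ range j, w k) (∑ k ∈ range (j + 1), w k)) :=
        card_biUnion_le
    _ = ∑ j ∈ range N with j ∈ A, w j := by
        simp only [Nat.card_Ico, sum_range_succ, Nat.add_sub_cancel_left]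

section Construction

variable (f : ℕ → ℝ)

noncomputable def blockWeight (i m : ℕ) : ℕ :=
  ⌈2 ^ i * f m / ∑ j ∈ range i, f j⌉₊

noncomputable def katetovMap (n : ℕ) : ℕ :=
  partialSumIndex (blockWeight f (Nat.log 2 n)) (n - 2 ^ Nat.log 2 n)

variable {f}

theorem katetovMap_two_pow_add {i r : ℕ} (hr : r < 2 ^ i) :
    katetovMap f (2 ^ i + r) = partialSumIndex (blockWeight f i) r := by
  have hlog : Nat.log 2 (2 ^ i + r) = i :=
    Nat.log_eq_of_pow_le_of_lt_pow (Nat.le_add_right _ _) (by rw [pow_succ]; omega)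
  rw [katetovMap, hlog, Nat.add_sub_cancel_left]

theorem two_pow_le_sum_blockWeight {i : ℕ} (hS : 0 < ∑ j ∈ range i, f j) :
    2 ^ i ≤ ∑ j ∈ range i, blockWeight f i j := by
  have : (2 : ℝ) ^ i ≤ ∑ j ∈ range i, (blockWeight f i j : ℝ) :=
    calc (2 : ℝ) ^ i = ∑ j ∈ range i, 2 ^ i * f j / ∑ k ∈ range i, f k := by
          rw [← sum_div, ← mul_sum, mul_div_cancel_right₀ _ hS.ne']
      _ ≤ ∑ j ∈ range i, (blockWeight f i j : ℝ) := sum_le_sum fun j _ => Nat.le_ceil _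
  exact_mod_cast this

theorem count_katetovMap_block_le (hf0 : ∀ m, 0 ≤ f m) {A : Set ℕ} [DecidablePred (· ∈ A)]
    (hA : Summable (A.indicator f)) {i : ℕ} (hS : 0 < ∑ j ∈ range i, f j) :
    (Nat.count (fun r => katetovMap f (2 ^ i + r) ∈ A) (2 ^ i) : ℝ) ≤
      2 ^ i * (∑' m, A.indicator f m) / ∑ j ∈ range i, f j + i := by
  set S := ∑ j ∈ range i, f j
  have hcount : Nat.count (fun r => katetovMap f (2 ^ i + r) ∈ A) (2 ^ i) =
      Nat.count (fun r => partialSumIndex (blockWeight f i) r ∈ A) (2 ^ i) := by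
    simp only [Nat.count_eq_card_filter_range]
    exact congrArg card (filter_congr fun r hr => by rw [katetovMap_two_pow_add (mem_range.1 hr)])
  have hsumA : ∑ j ∈ range i with j ∈ A, f j ≤ ∑' m, A.indicator f m := by
    simp only [sum_filter, ← Set.indicator_apply]
    exact hA.sum_le_tsum _ fun m _ => Set.indicator_nonneg (fun m _ => hf0 m) m
  have hweight : ∀ j, (blockWeight f i j : ℝ) ≤ 2 ^ i / S * f j + 1 := fun j => by
    rw [div_mul_eq_mul_div]
    exact (Nat.ceil_lt_add_one (by have := hf0 j; positivity)).le
  calc (Nat.count (fun r => katetovMap f (2 ^ i + r) ∈ A) (2 ^ i) : ℝ)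
      ≤ ∑ j ∈ range i with j ∈ A, (blockWeight f i j : ℝ) := by
        rw [hcount]
        exact_mod_cast count_partialSumIndex_mem_le _ A (two_pow_le_sum_blockWeight hS)
    _ ≤ ∑ j ∈ range i with j ∈ A, (2 ^ i / S * f j + 1) := sum_le_sum fun j _ => hweight j
    _ = 2 ^ i / S * ∑ j ∈ range i with j ∈ A, f j + #{j ∈ range i | j ∈ A} := by
        rw [sum_add_distrib, mul_sum, sum_const, nsmul_one]
    _ ≤ 2 ^ i / S * ∑' m, A.indicator f m + i := by
        gcongr
        exact (card_filter_le _ _).trans (card_range i).le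
    _ = 2 ^ i * (∑' m, A.indicator f m) / S + i := by ring

theorem isLittleO_count_katetovMap_block (hf0 : ∀ m, 0 ≤ f m) (hdiv : ¬ Summable f)
    {A : Set ℕ} [DecidablePred (· ∈ A)] (hA : Summable (A.indicator f)) :
    (fun i => (Nat.count (fun r => katetovMap f (2 ^ i + r) ∈ A) (2 ^ i) : ℝ)) =o[atTop]
      fun i => (2 : ℝ) ^ i := by
  have hS : Tendsto (fun i => ∑ j ∈ range i, f j) atTop atTop :=
    (not_summable_iff_tendsto_nat_atTop_of_nonneg hf0).1 hdiv
  have hbound : Tendsto (fun i : ℕ => (∑' m, A.indicator f m) / ∑ j ∈ range i, f j + i / 2 ^ i)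
      atTop (𝓝 0) := by
    simpa using (tendsto_const_nhds.div_atTop hS).add
      (tendsto_pow_const_div_const_pow_of_one_lt 1 one_lt_two)
  rw [isLittleO_iff_tendsto' (Eventually.of_forall fun i h => absurd h (by positivity))]
  refine squeeze_zero' (Eventually.of_forall fun i => by positivity) ?_ hbound
  filter_upwards [hS.eventually_gt_atTop 0] with i hSi
  rw [div_le_iff₀ (by positivity)]
  calc _ ≤ 2 ^ i * (∑' m, A.indicator f m) / ∑ j ∈ range i, f j + i :=
        count_katetovMap_block_le hf0 hA hSi
    _ = _ := by field_simp

end Construction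

theorem stmt19_general (f : ℕ → ℝ) (hf0 : ∀ m, 0 ≤ f m)
    (hdiv : ¬ Summable f) :
    ∃ h : ℕ → ℕ, ∀ A : Set ℕ, Summable (fun m : A => f m) →
      Filter.Tendsto (fun n : ℕ => (((h ⁻¹' A) ∩ Set.Iic n).ncard : ℝ) / n)
        Filter.atTop (nhds 0) := by
  classical
  refine ⟨katetovMap f, fun A hA => ?_⟩
  simp_rw [Nat.ncard_inter_Iic_eq_count]
  exact tendsto_count_div_of_isLittleO_dyadic _
    (isLittleO_count_katetovMap_block hf0 hdiv (summable_subtype_iff_indicator.mp hA))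

/-- Every summable ideal is Katětov below the asymptotic density-zero ideal. -/
theorem stmt19 (f : ℕ → ℝ) (hf0 : ∀ m, 0 ≤ f m)
    (hlim : Filter.Tendsto f Filter.atTop (nhds 0))
    (hdiv : ¬ Summable f) :
    ∃ h : ℕ → ℕ, ∀ A : Set ℕ, Summable (fun m : A => f m) →
      Filter.Tendsto (fun n : ℕ => (((h ⁻¹' A) ∩ Set.Iic n).ncard : ℝ) / n)
        Filter.atTop (nhds 0) :=
  stmt19_general f hf0 hdiv
end
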